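/- arXiv:2301.05502 — 3 statements merged into one kernel-verified Lean document; each statement's English description precedes it below -/
import Mathlib

section
/- For every n ≥ 0, d ≥ 1, every orthogonal matrix R ∈ O(n+1), and all real homogeneous polynomials p, q of degree d in n+1 variables, the Bombieri–Weyl inner product is invariant under the change of variables by R: ⟨p ∘ R, q ∘ R⟩_BW = ⟨p, q⟩_BW, where (p ∘ R)(x) = p(Rx). -/
open MvPolynomial

/-- The Bombieri–Weyl inner product on real polynomials in `n+1` variables, for degree `d`:
`⟨p,q⟩_BW = Σ_{|α|=d} (α₀!⋯α_n!/d!)·p_α·q_α`. -/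
noncomputable def bwInner (n d : ℕ) (p q : MvPolynomial (Fin (n + 1)) ℝ) : ℝ :=
  ∑ α ∈ p.support ∪ q.support,
    ((∏ i, ((α i).factorial : ℝ)) / (d.factorial : ℝ)) * coeff α p * coeff α q

/-! The polynomial `(y · x)^d = (y₀x₀ + ⋯ + yₙxₙ)^d` has coefficients `binom(d,α) y^α`, so it is a
reproducing kernel for the Bombieri–Weyl form on degree-`d` forms: `⟨p, (y · x)^d⟩ = p(y)`.
The substitution `x ↦ Rx` sends `(y · x)^d` to `(Rᵀy · x)^d`, hence for orthogonal `R`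
`⟨p ∘ R, (y · x)^d ∘ R⟩ = p(RRᵀy) = p(y) = ⟨p, (y · x)^d⟩`. This extends from the kernels to all
degree-`d` forms `q` because the kernels span them: a form orthogonal to every kernel vanishes at
every point, so the Bombieri–Weyl form identifies the finite-dimensional space of degree-`d` forms
with its dual, and a functional vanishing on all kernels is zero. -/

open Finset Matrix

noncomputable section

theorem Module.Dual.eq_of_eq_on_separating {K V ι : Type*} [Field K] [AddCommGroup V]
    [Module K V] [FiniteDimensional K V] (B : V →ₗ[K] Module.Dual K V) {v : ι → V}
    (hv : ∀ r, (∀ i, B r (v i) = 0) → r = 0) {f g : Module.Dual K V}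
    (h : ∀ i, f (v i) = g (v i)) : f = g := by
  have hB : Function.Injective B :=
    (injective_iff_map_eq_zero B).mpr fun r hr => hv r fun i => by simp [hr]
  obtain ⟨r, hr⟩ := (LinearMap.injective_iff_surjective_of_finrank_eq_finrank
    Subspace.dual_finrank_eq.symm).mp hB (f - g)
  obtain rfl : r = 0 := hv r fun i => by simp [hr, h]
  rwa [map_zero, eq_comm, sub_eq_zero] at hr

namespace MvPolynomial

section LinearForm

variable {R σ : Type*} [CommSemiring R] [Fintype σ]

def linearForm (y : σ → R) : MvPolynomial σ R :=
  ∑ i, C (y i) * X i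

theorem isHomogeneous_linearForm (y : σ → R) : (linearForm y).IsHomogeneous 1 :=
  IsHomogeneous.sum _ _ _ fun i _ => (isHomogeneous_X R i).C_mul _

theorem isHomogeneous_linearForm_pow (y : σ → R) (d : ℕ) :
    (linearForm y ^ d).IsHomogeneous d := by
  simpa using (isHomogeneous_linearForm y).pow d

theorem coeff_linearForm_pow (y : σ → R) {d : ℕ} {α : σ →₀ ℕ} (hα : α.degree = d) :
    coeff α (linearForm y ^ d) = Nat.multinomial univ α * ∏ i, y i ^ α i := by
  have hα' : (α.sum fun _ m => m) = d := hα
  simp only [linearForm, ← smul_eq_C_mul, coeff_linearCombination_X_pow_of_fintype, hα', if_pos,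
    Finsupp.multinomial_eq_of_support_subset (subset_univ α.support),
    Finsupp.prod_fintype _ _ (fun _ => pow_zero _)]

def linearSubst (A : Matrix σ σ R) : MvPolynomial σ R →ₐ[R] MvPolynomial σ R :=
  aeval fun i => ∑ j, C (A i j) * X j

theorem linearSubst_X (A : Matrix σ σ R) (i : σ) :
    linearSubst A (X i) = ∑ j, C (A i j) * X j :=
  aeval_X _ i

theorem linearSubst_C (A : Matrix σ σ R) (a : R) : linearSubst A (C a) = C a :=
  aeval_C _ a

theorem eval_linearSubst (A : Matrix σ σ R) (z : σ → R) (p : MvPolynomial σ R) :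
    eval z (linearSubst A p) = eval (A *ᵥ z) p := by
  induction p using MvPolynomial.induction_on with
  | C a => rw [linearSubst_C, eval_C, eval_C]
  | add p q hp hq => rw [map_add, eval_add, eval_add, hp, hq]
  | mul_X p i hp =>
    simp only [map_mul, hp, linearSubst_X, eval_X, map_sum, eval_C, Matrix.mulVec,
      dotProduct]

theorem linearSubst_linearForm (A : Matrix σ σ R) (y : σ → R) :
    linearSubst A (linearForm y) = linearForm (y ᵥ* A) := by
  simp only [linearForm, map_sum, map_mul, linearSubst_C, linearSubst_X, mul_sum,
    Matrix.vecMul, dotProduct, sum_mul, mul_assoc]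
  exact sum_comm

theorem IsHomogeneous.linearSubst {p : MvPolynomial σ R} {d : ℕ} (hp : p.IsHomogeneous d)
    (A : Matrix σ σ R) : (linearSubst A p).IsHomogeneous d := by
  have := hp.aeval _ fun i => isHomogeneous_linearForm fun j => A i j
  rwa [one_mul] at this

theorem IsHomogeneous.support_subset_finsuppAntidiag [DecidableEq σ] {p : MvPolynomial σ R}
    {d : ℕ} (hp : p.IsHomogeneous d) : p.support ⊆ finsuppAntidiag univ d := by
  intro α hα
  have hdeg : α.degree = d := by
    rw [Finsupp.degree_eq_weight_one]; exact hp (mem_support_iff.mp hα)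
  simpa [← Finsupp.degree_eq_sum] using hdeg

end LinearForm

section BombieriWeyl

variable {K σ : Type*} [Field K] [Fintype σ]

instance (d : ℕ) : FiniteDimensional K (homogeneousSubmodule σ K d) :=
  (Submodule.fg_iff_finiteDimensional _).mp (homogeneousSubmodule_fg σ K d)

def bwWeight (d : ℕ) (α : σ →₀ ℕ) : K :=
  (∏ i, ((α i).factorial : K)) / d.factorial

theorem bwWeight_mul_multinomial [CharZero K] {d : ℕ} {α : σ →₀ ℕ} (hα : α.degree = d) :
    bwWeight d α * Nat.multinomial univ α = (1 : K) := by
  have hspec := Nat.multinomial_spec univ α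
  rw [← Finsupp.degree_eq_sum, hα] at hspec
  rw [bwWeight, div_mul_eq_mul_div, div_eq_one_iff_eq (Nat.cast_ne_zero.mpr d.factorial_ne_zero)]
  exact_mod_cast hspec

variable [DecidableEq σ]

variable (σ) in
def bwForm (d : ℕ) : LinearMap.BilinForm K (MvPolynomial σ K) :=
  ∑ α ∈ finsuppAntidiag (univ : Finset σ) d,
    (bwWeight d α : K) • (LinearMap.mul K K).compl₁₂ (lcoeff K α) (lcoeff K α)

theorem bwForm_apply (d : ℕ) (p q : MvPolynomial σ K) :
    bwForm σ d p q = ∑ α ∈ finsuppAntidiag univ d, bwWeight d α * coeff α p * coeff α q := by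
  simp [bwForm, mul_assoc]

variable [CharZero K] {d : ℕ}

theorem bwForm_linearForm_pow {p : MvPolynomial σ K} (hp : p.IsHomogeneous d) (y : σ → K) :
    bwForm σ d p (linearForm y ^ d) = eval y p := by
  rw [bwForm_apply, eval_eq', ← sum_subset hp.support_subset_finsuppAntidiag]
  · refine sum_congr rfl fun α hα => ?_
    have hdeg : α.degree = d := by
      rw [Finsupp.degree_eq_weight_one]; exact hp (mem_support_iff.mp hα)
    rw [coeff_linearForm_pow y hdeg, mul_comm (bwWeight d α), mul_assoc,
      ← mul_assoc _ (Nat.multinomial _ _ : K), bwWeight_mul_multinomial hdeg, one_mul]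
  · intro α _ hα
    rw [notMem_support_iff.mp hα, mul_zero, zero_mul]

theorem eq_zero_of_forall_bwForm_linearForm_pow {p : MvPolynomial σ K} (hp : p.IsHomogeneous d)
    (h : ∀ y, bwForm σ d p (linearForm y ^ d) = 0) : p = 0 :=
  MvPolynomial.funext fun y => by rw [← bwForm_linearForm_pow hp, h, map_zero]

theorem homogeneousSubmodule_dual_ext {f g : Module.Dual K (homogeneousSubmodule σ K d)}
    (h : ∀ y, f ⟨linearForm y ^ d, isHomogeneous_linearForm_pow y d⟩ =
      g ⟨linearForm y ^ d, isHomogeneous_linearForm_pow y d⟩) : f = g := by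
  let V := homogeneousSubmodule σ K d
  refine Module.Dual.eq_of_eq_on_separating ((bwForm σ d).compl₁₂ V.subtype V.subtype)
    (fun r hr => ?_) h
  exact Subtype.ext (eq_zero_of_forall_bwForm_linearForm_pow r.2 hr)

theorem bwForm_linearSubst_linearForm_pow {A : Matrix σ σ K} (hA : A * Aᵀ = 1)
    {p : MvPolynomial σ K} (hp : p.IsHomogeneous d) (y : σ → K) :
    bwForm σ d (linearSubst A p) (linearSubst A (linearForm y ^ d)) =
      bwForm σ d p (linearForm y ^ d) := by
  rw [map_pow, linearSubst_linearForm, bwForm_linearForm_pow (hp.linearSubst A),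
    eval_linearSubst, bwForm_linearForm_pow hp, ← mulVec_transpose, mulVec_mulVec, hA, one_mulVec]

theorem bwForm_linearSubst {A : Matrix σ σ K} (hA : A * Aᵀ = 1) {p q : MvPolynomial σ K}
    (hp : p.IsHomogeneous d) (hq : q.IsHomogeneous d) :
    bwForm σ d (linearSubst A p) (linearSubst A q) = bwForm σ d p q := by
  let V := homogeneousSubmodule σ K d
  have hext := homogeneousSubmodule_dual_ext
    (f := (bwForm σ d (linearSubst A p) ∘ₗ (linearSubst A).toLinearMap) ∘ₗ V.subtype)
    (g := bwForm σ d p ∘ₗ V.subtype) (bwForm_linearSubst_linearForm_pow hA hp)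
  exact LinearMap.congr_fun hext ⟨q, hq⟩

end BombieriWeyl

end MvPolynomial

theorem bwInner_eq_bwForm {n d : ℕ} {p q : MvPolynomial (Fin (n + 1)) ℝ}
    (hp : p.IsHomogeneous d) (hq : q.IsHomogeneous d) :
    bwInner n d p q = bwForm (Fin (n + 1)) d p q := by
  rw [bwForm_apply, bwInner]
  refine sum_subset (union_subset hp.support_subset_finsuppAntidiag
    hq.support_subset_finsuppAntidiag) fun α _ hα => ?_
  rw [notMem_support_iff.mp (notMem_union.mp hα).1, mul_zero, zero_mul]

end

theorem bwInner_invariant_orthogonal_general (n d : ℕ)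
    (R : Matrix (Fin (n + 1)) (Fin (n + 1)) ℝ)
    (hR : R ∈ Matrix.orthogonalGroup (Fin (n + 1)) ℝ)
    (p q : MvPolynomial (Fin (n + 1)) ℝ)
    (hp : p.IsHomogeneous d) (hq : q.IsHomogeneous d) :
    bwInner n d (aeval (fun i => ∑ j, C (R i j) * X j) p)
        (aeval (fun i => ∑ j, C (R i j) * X j) q)
      = bwInner n d p q := by
  calc bwInner n d (linearSubst R p) (linearSubst R q)
      = bwForm _ d (linearSubst R p) (linearSubst R q) :=
        bwInner_eq_bwForm (hp.linearSubst R) (hq.linearSubst R)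
    _ = bwForm _ d p q := bwForm_linearSubst ((mem_orthogonalGroup_iff _ _).mp hR) hp hq
    _ = bwInner n d p q := (bwInner_eq_bwForm hp hq).symm

/-- For every `n ≥ 0`, `d ≥ 1`, every orthogonal matrix `R ∈ O(n+1)` and all
real homogeneous polynomials `p, q` of degree `d` in `n+1` variables, the Bombieri–Weyl inner
product is invariant under the change of variables by `R`:
`⟨p ∘ R, q ∘ R⟩_BW = ⟨p, q⟩_BW`, where `(p ∘ R)(x) = p(Rx)`. -/
theorem bwInner_invariant_orthogonal (n d : ℕ) (hd : 1 ≤ d)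
    (R : Matrix (Fin (n + 1)) (Fin (n + 1)) ℝ)
    (hR : R ∈ Matrix.orthogonalGroup (Fin (n + 1)) ℝ)
    (p q : MvPolynomial (Fin (n + 1)) ℝ)
    (hp : p.IsHomogeneous d) (hq : q.IsHomogeneous d) :
    bwInner n d (aeval (fun i => ∑ j, C (R i j) * X j) p)
        (aeval (fun i => ∑ j, C (R i j) * X j) q)
      = bwInner n d p q :=
  bwInner_invariant_orthogonal_general n d R hR p q hp hq
end

section
/- Let n ≥ 1, d ≥ 1, and let c : ℝ → ℝ^{n+1} be a differentiable curve with ‖c(t)‖ = 1 for all t. Then the curve t ↦ ℓ_{c(t)}^d in ℝ[x₀,…,x_n]_(d) is differentiable, its derivative at t equals d · ℓ_{c(t)}^{d-1} · ℓ_{c'(t)}, and its Bombieri–Weyl norm satisfies ‖(d/dt) ℓ_{c(t)}^d‖_BW = √d · ‖c'(t)‖. (This expresses that the pullback of the Bombieri–Weyl metric under the spherical Veronese map scales the round metric of S^n by the factor d on squared lengths.) -/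
/-!
The Bombieri–Weyl product of degree-`d` forms is `1 / d!` times the apolar pairing
`⟨p, q⟩ = ∑ α! p_α q_α`, for which multiplication by `X j` is adjoint to `∂/∂X j`; hence
multiplication by `ℓ_a` is adjoint to the directional derivative `D_a`. Differentiating
`‖c‖² = 1` gives `c ⊥ c'`, so for `a = c t`, `b = c' t` we get
`D_a (ℓ_a^(k+1) ℓ_b) = (k+1) ℓ_a^k ℓ_b`, and induction on `k` yields
`⟨ℓ_a^k ℓ_b, ℓ_a^k ℓ_b⟩ = k! ‖b‖²`. For `k = d - 1` the squared Bombieri–Weyl norm of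
`d ℓ_a^(d-1) ℓ_b` is therefore `d² (d-1)! ‖b‖² / d! = d ‖b‖²`.
-/

open MvPolynomial

/-- The linear form `ℓ_a(x) = a₀x₀ + ⋯ + a_n x_n` associated to `a ∈ ℝ^{n+1}`. -/
noncomputable def linForm (n : ℕ) (a : Fin (n + 1) → ℝ) : MvPolynomial (Fin (n + 1)) ℝ :=
  ∑ i, C (a i) * X i

open scoped Nat InnerProductSpace

theorem Finsupp.prod_factorial_add_single {σ : Type*} [Fintype σ] [DecidableEq σ] (β : σ →₀ ℕ)
    (j : σ) :
    ∏ i, ((β + Finsupp.single j 1 : σ →₀ ℕ) i)! = (β j + 1) * ∏ i, (β i)! := by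
  rw [← Finset.mul_prod_erase _ _ (Finset.mem_univ j),
    ← Finset.mul_prod_erase _ (fun i => (β i)!) (Finset.mem_univ j),
    Finset.prod_congr rfl fun i hi => by
      rw [Finsupp.add_apply, Finsupp.single_eq_of_ne (Finset.ne_of_mem_erase hi), add_zero]]
  simp [Nat.factorial_succ, mul_assoc]

namespace MvPolynomial

noncomputable section Apolar

variable {R σ : Type*} [CommSemiring R] [Fintype σ]

def apolarFun (p q : MvPolynomial σ R) : R :=
  ∑ α ∈ p.support, ((∏ i, (α i)! : ℕ) : R) * coeff α p * coeff α q

theorem apolarFun_eq_sum_of_support_subset {p : MvPolynomial σ R} {s : Finset (σ →₀ ℕ)}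
    (h : p.support ⊆ s) (q : MvPolynomial σ R) :
    apolarFun p q = ∑ α ∈ s, ((∏ i, (α i)! : ℕ) : R) * coeff α p * coeff α q :=
  Finset.sum_subset h fun α _ hα => by rw [notMem_support_iff.1 hα]; simp

variable (R σ) in
def apolar : MvPolynomial σ R →ₗ[R] MvPolynomial σ R →ₗ[R] R :=
  LinearMap.mk₂ R apolarFun
    (fun p p' q => by
      classical
      rw [apolarFun_eq_sum_of_support_subset support_add,
        apolarFun_eq_sum_of_support_subset (Finset.subset_union_left (s₂ := p'.support)),
        apolarFun_eq_sum_of_support_subset (Finset.subset_union_right (s₁ := p.support)),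
        ← Finset.sum_add_distrib]
      simp only [coeff_add, add_mul, mul_add])
    (fun r p q => by
      rw [apolarFun_eq_sum_of_support_subset support_smul, apolarFun, Finset.smul_sum]
      simp only [coeff_smul, smul_eq_mul]
      exact Finset.sum_congr rfl fun _ _ => by ring)
    (fun p q q' => by simp only [apolarFun, coeff_add, mul_add, Finset.sum_add_distrib])
    (fun r p q => by
      simp only [apolarFun, coeff_smul, smul_eq_mul, Finset.mul_sum]
      exact Finset.sum_congr rfl fun _ _ => by ring)

theorem apolar_apply (p q : MvPolynomial σ R) :
    apolar R σ p q = ∑ α ∈ p.support, ((∏ i, (α i)! : ℕ) : R) * coeff α p * coeff α q := rfl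

theorem apolar_one_left (q : MvPolynomial σ R) : apolar R σ 1 q = coeff 0 q := by
  rw [← C_1]
  exact (apolarFun_eq_sum_of_support_subset support_monomial_subset q).trans (by simp)

theorem apolar_X_mul (j : σ) (p q : MvPolynomial σ R) :
    apolar R σ (X j * p) q = apolar R σ p (pderiv j q) := by
  classical
  simp only [apolar_apply, support_X_mul, Finset.sum_map, coeff_pderiv]
  refine Finset.sum_congr rfl fun β _ => ?_
  rw [addLeftEmbedding_apply, coeff_X_mul, add_comm, Finsupp.prod_factorial_add_single]
  push_cast
  ring

def dirDeriv (a : σ → R) : Derivation R (MvPolynomial σ R) (MvPolynomial σ R) :=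
  ∑ j, a j • pderiv j

theorem dirDeriv_apply (a : σ → R) (q : MvPolynomial σ R) :
    dirDeriv a q = ∑ j, C (a j) * pderiv j q := by
  rw [dirDeriv, ← Derivation.coeFnAddMonoidHom_apply, map_sum, Finset.sum_apply]
  simp [Derivation.coeFnAddMonoidHom_apply, C_mul']

theorem dirDeriv_X (a : σ → R) (i : σ) : dirDeriv a (X i) = C (a i) := by
  classical
  simp [dirDeriv_apply, pderiv_X, Pi.single_apply]

theorem apolar_sum_C_mul_X_mul (a : σ → R) (p q : MvPolynomial σ R) :
    apolar R σ ((∑ j, C (a j) * X j) * p) q = apolar R σ p (dirDeriv a q) := by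
  simp only [Finset.sum_mul, map_sum, LinearMap.coe_sum, Finset.sum_apply, dirDeriv_apply,
    C_mul', map_smul, LinearMap.smul_apply, apolar_X_mul, smul_mul_assoc]

end Apolar

end MvPolynomial

section CoeffDeriv

variable {𝕜 σ : Type*} [NontriviallyNormedField 𝕜] {P Q : 𝕜 → MvPolynomial σ 𝕜}
  {P' Q' : MvPolynomial σ 𝕜} {t : 𝕜}

theorem MvPolynomial.hasDerivAt_coeff_mul
    (hP : ∀ γ, HasDerivAt (fun s => coeff γ (P s)) (coeff γ P') t)
    (hQ : ∀ γ, HasDerivAt (fun s => coeff γ (Q s)) (coeff γ Q') t) (γ : σ →₀ ℕ) :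
    HasDerivAt (fun s => coeff γ (P s * Q s)) (coeff γ (P' * Q t + P t * Q')) t := by
  classical
  simp only [coeff_mul, coeff_add, ← Finset.sum_add_distrib]
  exact HasDerivAt.fun_sum fun x _ => (hP x.1).mul (hQ x.2)

theorem MvPolynomial.hasDerivAt_coeff_pow
    (hP : ∀ γ, HasDerivAt (fun s => coeff γ (P s)) (coeff γ P') t) (m : ℕ) (γ : σ →₀ ℕ) :
    HasDerivAt (fun s => coeff γ (P s ^ m)) (coeff γ ((m : 𝕜) • (P t ^ (m - 1) * P'))) t := by
  induction m generalizing γ with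
  | zero => simpa using hasDerivAt_const t (coeff γ (1 : MvPolynomial σ 𝕜))
  | succ m ih =>
    simp_rw [pow_succ]
    convert hasDerivAt_coeff_mul ih hP γ using 2
    rcases m with _ | m
    · simp
    · simp only [Nat.cast_smul_eq_nsmul, nsmul_eq_mul, Nat.add_sub_cancel]
      push_cast
      ring

end CoeffDeriv

theorem hasDerivAt_coeff_linForm {n : ℕ} {c : ℝ → Fin (n + 1) → ℝ} {c' : Fin (n + 1) → ℝ}
    {t : ℝ} (hc : HasDerivAt c c' t) (γ : Fin (n + 1) →₀ ℕ) :
    HasDerivAt (fun s => coeff γ (linForm n (c s))) (coeff γ (linForm n c')) t := by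
  simp only [linForm, coeff_sum, coeff_C_mul]
  exact HasDerivAt.fun_sum fun i _ => (hasDerivAt_pi.1 hc i).mul_const _

theorem HasDerivAt.inner_eq_zero_of_norm_eq {F : Type*} [NormedAddCommGroup F]
    [InnerProductSpace ℝ F] {c : ℝ → F} {c' : F} {t r : ℝ} (hc : HasDerivAt c c' t)
    (hr : ∀ s, ‖c s‖ = r) : ⟪c t, c'⟫_ℝ = 0 := by
  have h := hc.norm_sq
  simp only [hr] at h
  linarith [h.unique (hasDerivAt_const t (r ^ 2))]

section LinForm

variable {n : ℕ}

theorem apolar_linForm_mul (a : Fin (n + 1) → ℝ) (p q : MvPolynomial (Fin (n + 1)) ℝ) :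
    apolar ℝ _ (linForm n a * p) q = apolar ℝ _ p (dirDeriv a q) :=
  apolar_sum_C_mul_X_mul a p q

theorem dirDeriv_linForm (a b : Fin (n + 1) → ℝ) : dirDeriv a (linForm n b) = C (a ⬝ᵥ b) := by
  simp [linForm, dotProduct, C_mul', dirDeriv_X, mul_comm]

theorem dirDeriv_linForm_pow_succ_mul {a b : Fin (n + 1) → ℝ} (ha : a ⬝ᵥ a = 1) (hab : a ⬝ᵥ b = 0)
    (k : ℕ) :
    dirDeriv a (linForm n a ^ (k + 1) * linForm n b)
      = ((k + 1 : ℕ) : ℝ) • (linForm n a ^ k * linForm n b) := by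
  rw [Derivation.leibniz, Derivation.leibniz_pow, dirDeriv_linForm, dirDeriv_linForm, ha, hab]
  simp only [map_zero, map_one, nsmul_eq_mul, smul_eq_mul, Nat.add_sub_cancel]
  rw [smul_eq_C_mul, map_natCast]
  ring

theorem apolar_linForm_pow_mul_self {a b : Fin (n + 1) → ℝ} (ha : a ⬝ᵥ a = 1) (hab : a ⬝ᵥ b = 0)
    (k : ℕ) :
    apolar ℝ _ (linForm n a ^ k * linForm n b) (linForm n a ^ k * linForm n b)
      = k ! * (b ⬝ᵥ b) := by
  induction k with
  | zero =>
    rw [pow_zero, one_mul, ← mul_one (linForm n b), apolar_linForm_mul, mul_one,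
      dirDeriv_linForm, apolar_one_left, coeff_zero_C]
    simp
  | succ k ih =>
    rw [pow_succ', mul_assoc, apolar_linForm_mul, ← mul_assoc, ← pow_succ',
      dirDeriv_linForm_pow_succ_mul ha hab, map_smul, ih, Nat.factorial_succ]
    push_cast
    ring

theorem bwInner_eq_apolar (d : ℕ) (p q : MvPolynomial (Fin (n + 1)) ℝ) :
    bwInner n d p q = apolar ℝ _ p q / d ! := by
  rw [bwInner, show apolar ℝ _ p q = apolarFun p q from rfl,
    apolarFun_eq_sum_of_support_subset Finset.subset_union_left q, Finset.sum_div]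
  push_cast
  exact Finset.sum_congr rfl fun _ _ => by ring

theorem bwInner_smul_linForm_pow_mul_self (d : ℕ) {a b : Fin (n + 1) → ℝ} (ha : a ⬝ᵥ a = 1)
    (hab : a ⬝ᵥ b = 0) :
    bwInner n d ((d : ℝ) • (linForm n a ^ (d - 1) * linForm n b))
        ((d : ℝ) • (linForm n a ^ (d - 1) * linForm n b)) = d * (b ⬝ᵥ b) := by
  rcases d with _ | k
  · simp [bwInner]
  rw [bwInner_eq_apolar, map_smul, map_smul, LinearMap.smul_apply, Nat.add_sub_cancel,
    apolar_linForm_pow_mul_self ha hab, Nat.factorial_succ, smul_eq_mul, smul_eq_mul]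
  push_cast
  field_simp

end LinForm

theorem veronese_curve_derivative_general (n d : ℕ)
    (c : ℝ → EuclideanSpace ℝ (Fin (n + 1))) (hc : Differentiable ℝ c)
    (hsph : ∀ t, ‖c t‖ = 1) (t : ℝ) :
    (∀ γ : Fin (n + 1) →₀ ℕ,
      HasDerivAt (fun s => coeff γ (linForm n (c s) ^ d))
        (coeff γ ((d : ℝ) • (linForm n (c t) ^ (d - 1) * linForm n (WithLp.ofLp (deriv c t))))) t) ∧
    Real.sqrt (bwInner n d
        ((d : ℝ) • (linForm n (c t) ^ (d - 1) * linForm n (WithLp.ofLp (deriv c t))))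
        ((d : ℝ) • (linForm n (c t) ^ (d - 1) * linForm n (WithLp.ofLp (deriv c t)))))
      = Real.sqrt d * ‖deriv c t‖ := by
  have hc' : HasDerivAt c (deriv c t) t := (hc t).hasDerivAt
  have hdot (x y : EuclideanSpace ℝ (Fin (n + 1))) : x.ofLp ⬝ᵥ y.ofLp = ⟪x, y⟫_ℝ := by
    rw [EuclideanSpace.inner_eq_star_dotProduct, dotProduct_comm]
    rfl
  have hct : (c t).ofLp ⬝ᵥ (c t).ofLp = 1 := by
    rw [hdot, real_inner_self_eq_norm_sq, hsph, one_pow]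
  have horth : (c t).ofLp ⬝ᵥ (deriv c t).ofLp = 0 := by
    rw [hdot]
    exact hc'.inner_eq_zero_of_norm_eq hsph
  refine ⟨hasDerivAt_coeff_pow
    (hasDerivAt_coeff_linForm ((PiLp.hasFDerivAt_ofLp 2 (c t)).comp_hasDerivAt t hc')) d, ?_⟩
  rw [bwInner_smul_linForm_pow_mul_self d hct horth, hdot, real_inner_self_eq_norm_sq,
    Real.sqrt_mul (Nat.cast_nonneg d), Real.sqrt_sq (norm_nonneg _)]

/-- Let `n ≥ 1`, `d ≥ 1`, and let `c : ℝ → ℝ^{n+1}` be a differentiable curve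
with `‖c(t)‖ = 1` for all `t`.  Then the curve `t ↦ ℓ_{c(t)}^d` is differentiable
(coefficientwise) with derivative `d · ℓ_{c(t)}^{d-1} · ℓ_{c'(t)}`, and the Bombieri–Weyl
norm of this derivative equals `√d · ‖c'(t)‖`. -/
theorem veronese_curve_derivative (n d : ℕ) (hn : 1 ≤ n) (hd : 1 ≤ d)
    (c : ℝ → EuclideanSpace ℝ (Fin (n + 1))) (hc : Differentiable ℝ c)
    (hsph : ∀ t, ‖c t‖ = 1) (t : ℝ) :
    (∀ γ : Fin (n + 1) →₀ ℕ,
      HasDerivAt (fun s => coeff γ (linForm n (c s) ^ d))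
        (coeff γ ((d : ℝ) • (linForm n (c t) ^ (d - 1) * linForm n (WithLp.ofLp (deriv c t))))) t) ∧
    Real.sqrt (bwInner n d
        ((d : ℝ) • (linForm n (c t) ^ (d - 1) * linForm n (WithLp.ofLp (deriv c t))))
        ((d : ℝ) • (linForm n (c t) ^ (d - 1) * linForm n (WithLp.ofLp (deriv c t)))))
      = Real.sqrt d * ‖deriv c t‖ :=
  veronese_curve_derivative_general n d c hc hsph t
end

section
/- Let n ≥ 1, d ≥ 2, and consider the curve c : ℝ → ℝ[x₀,…,x_n]_(d) given by c(t) = (cos(t·d^{-1/2})·x₀ + sin(t·d^{-1/2})·x₁)^d, which lies on the Bombieri–Weyl unit sphere and is a unit-speed curve (‖c'(t)‖_BW = 1 for all t). Then c''(0) = −x₀^d + (d−1)·x₀^{d-2}x₁², we have ⟨c''(0), c(0)⟩_BW = −1, and the component of c''(0) orthogonal to c(0) satisfies ‖c''(0) − ⟨c''(0),c(0)⟩_BW · c(0)‖_BW = √(2(d−1)/d). -/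
open MvPolynomial

/-- The curve `c(t) = (cos(t·d^{-1/2})·x₀ + sin(t·d^{-1/2})·x₁)^d` on the spherical Veronese
surface. -/
noncomputable def veroneseCurve (n d : ℕ) (t : ℝ) : MvPolynomial (Fin (n + 1)) ℝ :=
  (C (Real.cos (t / Real.sqrt d)) * X 0 + C (Real.sin (t / Real.sqrt d)) * X 1) ^ d

/-- The derivative of `veroneseCurve`:
`c'(t) = √d · ℓ(t)^{d-1} · (-sin(t/√d)·x₀ + cos(t/√d)·x₁)`. -/
noncomputable def veroneseCurveDeriv (n d : ℕ) (t : ℝ) : MvPolynomial (Fin (n + 1)) ℝ :=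
  Real.sqrt d •
    ((C (Real.cos (t / Real.sqrt d)) * X 0 + C (Real.sin (t / Real.sqrt d)) * X 1) ^ (d - 1) *
      (C (-Real.sin (t / Real.sqrt d)) * X 0 + C (Real.cos (t / Real.sqrt d)) * X 1))

/-!
For linear forms `ℓ_a = a₀x₀ + a₁x₁` the Bombieri–Weyl product satisfies
`⟨ℓ_a^d, ℓ_b^d⟩ = (a₀b₀ + a₁b₁)^d`, hence `⟨c(t), c(u)⟩ = cos((t - u)/√d)^d`. Differentiating this
identity once in `t` and once in `u` gives `‖c'(t)‖ = 1`; this is legitimate because every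
polynomial involved is homogeneous of degree `d`, so `bwInner` is a fixed finite sum of products of
coefficients along the curve. The derivatives of `c(t) = ℓ(t)^d` come from the coefficientwise
product rule, and at `t = 0` give `c''(0) = (d-1)x₀^{d-2}x₁² - x₀^d`. Finally `x₀^d` and
`x₀^{d-2}x₁²` are orthogonal monomials with squared norms `1` and `2/(d(d-1))`.
-/

open Finset

section Polynomials

variable {σ R : Type*} [CommSemiring R]

lemma prod_single_add_single_apply {ι M : Type*} [Fintype ι] [DecidableEq ι] [CommMonoid M]
    {i j : ι} (hij : i ≠ j) (a b : ℕ) {f : ℕ → M} (hf : f 0 = 1) :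
    ∏ k, f ((Finsupp.single i a + Finsupp.single j b) k) = f a * f b := by
  rw [prod_eq_mul i j hij (fun k _ hk => by simp [hk.1.symm, hk.2.symm, hf]) (by simp) (by simp)]
  simp [hij, hij.symm]

lemma support_subset_finsuppAntidiag [Fintype σ] [DecidableEq σ] {p : MvPolynomial σ R} {d : ℕ}
    (hp : p.IsHomogeneous d) : p.support ⊆ univ.finsuppAntidiag d := fun α hα => by
  refine mem_finsuppAntidiag.mpr ⟨?_, subset_univ _⟩
  by_contra h
  exact mem_support_iff.mp hα (hp.coeff_eq_zero (by rwa [Finsupp.degree_eq_sum]))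

lemma X_pow_mul_X_pow_eq_monomial (i j : σ) (a b : ℕ) :
    (X i ^ a * X j ^ b : MvPolynomial σ R) =
      monomial (Finsupp.single i a + Finsupp.single j b) 1 := by
  rw [X_pow_eq_monomial, X_pow_eq_monomial, monomial_mul, one_mul]

lemma isHomogeneous_linearForm (a b : R) (i j : σ) :
    (C a * X i + C b * X j : MvPolynomial σ R).IsHomogeneous 1 :=
  (isHomogeneous_C_mul_X a i).add (isHomogeneous_C_mul_X b j)

lemma linearForm_pow_eq_sum (i j : σ) (a b : R) (m : ℕ) :
    (C a * X i + C b * X j : MvPolynomial σ R) ^ m =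
      ∑ k ∈ range (m + 1),
        monomial (Finsupp.single i k + Finsupp.single j (m - k))
          (m.choose k * a ^ k * b ^ (m - k)) := by
  rw [add_pow]
  refine sum_congr rfl fun k _ => ?_
  simp only [mul_pow, ← C_pow, X_pow_eq_monomial, C_mul_monomial, monomial_mul]
  rw [← map_natCast (C : R →+* MvPolynomial σ R), mul_comm, C_mul_monomial]
  congr 1
  ring

end Polynomials

section BombieriWeyl

variable {n d : ℕ}

lemma bwInner_eq_sum_of_subset {S : Finset (Fin (n + 1) →₀ ℕ)} {p q : MvPolynomial (Fin (n + 1)) ℝ}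
    (hp : p.support ⊆ S) (hq : q.support ⊆ S) :
    bwInner n d p q =
      ∑ α ∈ S, (∏ i, ((α i).factorial : ℝ)) / d.factorial * coeff α p * coeff α q := by
  refine sum_subset (union_subset hp hq) fun α _ hα => ?_
  rw [notMem_support_iff.mp (notMem_union.mp hα).1, mul_zero, zero_mul]

lemma bwInner_comm (p q : MvPolynomial (Fin (n + 1)) ℝ) : bwInner n d p q = bwInner n d q p := by
  rw [bwInner, bwInner, union_comm]
  exact sum_congr rfl fun _ _ => mul_right_comm _ _ _

lemma bwInner_add_left (p₁ p₂ q : MvPolynomial (Fin (n + 1)) ℝ) :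
    bwInner n d (p₁ + p₂) q = bwInner n d p₁ q + bwInner n d p₂ q := by
  classical
  set S := p₁.support ∪ p₂.support ∪ q.support
  have h₁ : p₁.support ⊆ S := subset_union_left.trans subset_union_left
  have h₂ : p₂.support ⊆ S := subset_union_right.trans subset_union_left
  have hq : q.support ⊆ S := subset_union_right
  rw [bwInner_eq_sum_of_subset (support_add.trans (union_subset h₁ h₂)) hq,
    bwInner_eq_sum_of_subset h₁ hq, bwInner_eq_sum_of_subset h₂ hq,
    ← sum_add_distrib]
  exact sum_congr rfl fun _ _ => by rw [coeff_add]; ring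

lemma bwInner_smul_left (c : ℝ) (p q : MvPolynomial (Fin (n + 1)) ℝ) :
    bwInner n d (c • p) q = c * bwInner n d p q := by
  rw [bwInner_eq_sum_of_subset (support_smul.trans subset_union_left) subset_union_right,
    bwInner, mul_sum]
  exact sum_congr rfl fun _ _ => by rw [coeff_smul, smul_eq_mul]; ring

variable (n d) in
noncomputable def bwForm : LinearMap.BilinForm ℝ (MvPolynomial (Fin (n + 1)) ℝ) :=
  LinearMap.mk₂ ℝ (bwInner n d) bwInner_add_left bwInner_smul_left
    (fun p q₁ q₂ => by rw [bwInner_comm, bwInner_add_left, bwInner_comm, bwInner_comm q₂])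
    (fun c p q => by rw [bwInner_comm, bwInner_smul_left, bwInner_comm, smul_eq_mul])

lemma bwForm_apply (p q : MvPolynomial (Fin (n + 1)) ℝ) : bwForm n d p q = bwInner n d p q := rfl

lemma bwInner_monomial_monomial (α β : Fin (n + 1) →₀ ℕ) (a b : ℝ) :
    bwInner n d (monomial α a) (monomial β b) =
      if α = β then (∏ i, ((α i).factorial : ℝ)) / d.factorial * a * b else 0 := by
  classical
  split_ifs with h
  · subst h
    rw [bwInner_eq_sum_of_subset support_monomial_subset support_monomial_subset,
      sum_singleton, coeff_monomial, coeff_monomial, if_pos rfl, if_pos rfl]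
  · have hα : (monomial α a).support ⊆ {α, β} := support_monomial_subset.trans (by simp)
    have hβ : (monomial β b).support ⊆ {α, β} := support_monomial_subset.trans (by simp)
    rw [bwInner_eq_sum_of_subset hα hβ, sum_pair h]
    simp [coeff_monomial, h, Ne.symm h]

lemma bwInner_linearForm_pow {i j : Fin (n + 1)} (hij : i ≠ j) (a₀ a₁ b₀ b₁ : ℝ) :
    bwInner n d ((C a₀ * X i + C a₁ * X j) ^ d) ((C b₀ * X i + C b₁ * X j) ^ d) =
      (a₀ * b₀ + a₁ * b₁) ^ d := by
  classical
  have hinj : ∀ k l, Finsupp.single i k + Finsupp.single j (d - k) =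
      Finsupp.single i l + Finsupp.single j (d - l) ↔ k = l := fun k l =>
    ⟨fun h => by simpa [hij.symm] using DFunLike.congr_fun h i, fun h => h ▸ rfl⟩
  rw [linearForm_pow_eq_sum, linearForm_pow_eq_sum, ← bwForm_apply]
  simp only [map_sum, LinearMap.sum_apply, bwForm_apply, bwInner_monomial_monomial, hinj,
    sum_ite_eq', prod_single_add_single_apply hij _ _ (f := fun m => (m.factorial : ℝ)) (by simp),
    add_pow]
  refine sum_congr rfl fun k hk => ?_
  rw [if_pos hk, Nat.cast_choose ℝ (Nat.lt_succ_iff.mp (mem_range.mp hk))]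
  have : (d.factorial : ℝ) ≠ 0 := by positivity
  field_simp
  ring

end BombieriWeyl

section CoeffDeriv

variable {σ : Type*} {p q : ℝ → MvPolynomial σ ℝ} {p' q' : MvPolynomial σ ℝ} {t : ℝ}

/-- `MvPolynomial` carries no topology, so curves of polynomials are differentiated
coefficientwise. -/
def HasCoeffDerivAt (p : ℝ → MvPolynomial σ ℝ) (p' : MvPolynomial σ ℝ) (t : ℝ) : Prop :=
  ∀ γ, HasDerivAt (fun s => coeff γ (p s)) (coeff γ p') t

lemma hasCoeffDerivAt_const (r : MvPolynomial σ ℝ) : HasCoeffDerivAt (fun _ => r) 0 t :=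
  fun γ => by simpa using hasDerivAt_const t (coeff γ r)

lemma hasCoeffDerivAt_C_mul {f : ℝ → ℝ} {f' : ℝ} (hf : HasDerivAt f f' t) (r : MvPolynomial σ ℝ) :
    HasCoeffDerivAt (fun s => C (f s) * r) (C f' * r) t :=
  fun γ => by simpa only [coeff_C_mul] using hf.mul_const (coeff γ r)

namespace HasCoeffDerivAt

lemma congr_deriv (hp : HasCoeffDerivAt p p' t) (h : p' = q') : HasCoeffDerivAt p q' t :=
  h ▸ hp

lemma add (hp : HasCoeffDerivAt p p' t) (hq : HasCoeffDerivAt q q' t) :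
    HasCoeffDerivAt (fun s => p s + q s) (p' + q') t :=
  fun γ => by simpa only [coeff_add] using (hp γ).fun_add (hq γ)

lemma const_smul (hp : HasCoeffDerivAt p p' t) (c : ℝ) :
    HasCoeffDerivAt (fun s => c • p s) (c • p') t :=
  fun γ => by simpa only [coeff_smul, smul_eq_mul] using (hp γ).const_mul c

lemma mul (hp : HasCoeffDerivAt p p' t) (hq : HasCoeffDerivAt q q' t) :
    HasCoeffDerivAt (fun s => p s * q s) (p' * q t + p t * q') t := by
  classical
  intro γ
  simp only [coeff_add, coeff_mul, ← sum_add_distrib]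
  exact HasDerivAt.fun_sum fun x _ => (hp x.1).mul (hq x.2)

lemma pow (hp : HasCoeffDerivAt p p' t) (m : ℕ) :
    HasCoeffDerivAt (fun s => p s ^ m) ((m : ℝ) • (p t ^ (m - 1) * p')) t := by
  induction m with
  | zero => simpa using hasCoeffDerivAt_const (1 : MvPolynomial σ ℝ)
  | succ m ih =>
    have h := ih.mul hp
    simp only [← pow_succ] at h
    convert h using 1
    rcases m with _ | m
    · simp
    · simp only [smul_eq_C_mul, pow_succ, Nat.cast_add, Nat.cast_one, map_add, map_one,
        Nat.add_sub_cancel]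
      ring

end HasCoeffDerivAt

end CoeffDeriv

section BombieriWeylDeriv

variable {n d : ℕ} {p : ℝ → MvPolynomial (Fin (n + 1)) ℝ} {p' q : MvPolynomial (Fin (n + 1)) ℝ}
  {t : ℝ}

lemma HasCoeffDerivAt.hasDerivAt_bwInner_left (h : HasCoeffDerivAt p p' t)
    (hp : ∀ s, (p s).IsHomogeneous d) (hp' : p'.IsHomogeneous d) (hq : q.IsHomogeneous d) :
    HasDerivAt (fun s => bwInner n d (p s) q) (bwInner n d p' q) t := by
  classical
  simp only [bwInner_eq_sum_of_subset (support_subset_finsuppAntidiag (hp _))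
    (support_subset_finsuppAntidiag hq), bwInner_eq_sum_of_subset
    (support_subset_finsuppAntidiag hp') (support_subset_finsuppAntidiag hq)]
  exact HasDerivAt.fun_sum fun α _ => ((h α).const_mul _).mul_const _

lemma HasCoeffDerivAt.hasDerivAt_bwInner_right (h : HasCoeffDerivAt p p' t)
    (hp : ∀ s, (p s).IsHomogeneous d) (hp' : p'.IsHomogeneous d) (hq : q.IsHomogeneous d) :
    HasDerivAt (fun s => bwInner n d q (p s)) (bwInner n d q p') t := by
  simpa only [bwInner_comm q] using h.hasDerivAt_bwInner_left hp hp' hq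

end BombieriWeylDeriv

section Veronese

variable {n d : ℕ}

local notation "x₀" => (X 0 : MvPolynomial (Fin (n + 1)) ℝ)
local notation "x₁" => (X 1 : MvPolynomial (Fin (n + 1)) ℝ)

lemma isHomogeneous_veroneseCurve (t : ℝ) : (veroneseCurve n d t).IsHomogeneous d := by
  simpa only [veroneseCurve, one_mul] using (isHomogeneous_linearForm _ _ _ _).pow d

lemma isHomogeneous_veroneseCurveDeriv (hd : 1 ≤ d) (t : ℝ) :
    (veroneseCurveDeriv n d t).IsHomogeneous d := by
  rw [veroneseCurveDeriv, smul_eq_C_mul]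
  refine IsHomogeneous.C_mul ?_ _
  convert ((isHomogeneous_linearForm _ _ _ _).pow (d - 1)).mul
    (isHomogeneous_linearForm _ _ _ _) using 1
  omega

lemma hasCoeffDerivAt_veroneseCurve (t : ℝ) :
    HasCoeffDerivAt (veroneseCurve n d) (veroneseCurveDeriv n d t) t := by
  have hx := (hasDerivAt_id' t).div_const (√d)
  have hℓ := (hasCoeffDerivAt_C_mul hx.cos x₀).add (hasCoeffDerivAt_C_mul hx.sin x₁)
  refine (hℓ.pow d).congr_deriv ?_
  have hC : C (d : ℝ) * C (1 / √d) = (C (√d) : MvPolynomial (Fin (n + 1)) ℝ) := by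
    rw [← map_mul, mul_one_div, Real.div_sqrt]
  simp only [veroneseCurveDeriv, smul_eq_C_mul, map_mul, map_neg]
  linear_combination (-C (Real.sin (t / √d)) * x₀ + C (Real.cos (t / √d)) * x₁) *
    ((C (Real.cos (t / √d)) * x₀ + C (Real.sin (t / √d)) * x₁) ^ (d - 1)) * hC

lemma hasCoeffDerivAt_veroneseCurveDeriv_zero (hd : 1 ≤ d) :
    HasCoeffDerivAt (veroneseCurveDeriv n d)
      (((d : ℝ) - 1) • (x₀ ^ (d - 2) * x₁ ^ 2) - x₀ ^ d) 0 := by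
  have hx := (hasDerivAt_id' (0 : ℝ)).div_const (√d)
  have hℓ := (hasCoeffDerivAt_C_mul hx.cos x₀).add (hasCoeffDerivAt_C_mul hx.sin x₁)
  have hm := (hasCoeffDerivAt_C_mul hx.sin.neg x₀).add (hasCoeffDerivAt_C_mul hx.cos x₁)
  refine (((hℓ.pow (d - 1)).mul hm).const_smul (√d)).congr_deriv ?_
  have hC : C (√d) * C (1 / √d) = (1 : MvPolynomial (Fin (n + 1)) ℝ) := by
    rw [← map_mul, mul_one_div_cancel (by positivity), map_one]
  obtain ⟨e, rfl⟩ : ∃ e, d = e + 1 := ⟨d - 1, by omega⟩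
  simp only [zero_div, Real.cos_zero, Real.sin_zero, Pi.neg_apply, neg_zero, zero_mul, map_one,
    map_zero, map_neg, one_mul, add_zero, smul_eq_C_mul, Nat.add_sub_cancel, Nat.cast_add,
    Nat.cast_one, add_sub_cancel_right, show e + 1 - 2 = e - 1 by omega] at hC ⊢
  linear_combination (C (e : ℝ) * x₀ ^ (e - 1) * x₁ ^ 2 - x₀ ^ e * x₀) * hC

lemma bwInner_veroneseCurve (h01 : (0 : Fin (n + 1)) ≠ 1) (t u : ℝ) :
    bwInner n d (veroneseCurve n d t) (veroneseCurve n d u) = Real.cos ((t - u) / √d) ^ d := by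
  rw [veroneseCurve, veroneseCurve, bwInner_linearForm_pow h01, sub_div, Real.cos_sub]

lemma bwInner_veroneseCurveDeriv_veroneseCurve (h01 : (0 : Fin (n + 1)) ≠ 1) (hd : 1 ≤ d)
    (t u : ℝ) :
    bwInner n d (veroneseCurveDeriv n d t) (veroneseCurve n d u) =
      -√d * Real.cos ((t - u) / √d) ^ (d - 1) * Real.sin ((t - u) / √d) := by
  have h := (hasCoeffDerivAt_veroneseCurve (n := n) t).hasDerivAt_bwInner_left
    isHomogeneous_veroneseCurve (isHomogeneous_veroneseCurveDeriv hd t)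
    (isHomogeneous_veroneseCurve u)
  simp only [bwInner_veroneseCurve h01] at h
  refine h.unique ?_
  have hx := ((hasDerivAt_id' t).sub_const u).div_const (√d)
  refine hx.cos.pow d |>.congr_deriv ?_
  have hd' : (d : ℝ) * (1 / √d) = √d := by rw [mul_one_div, Real.div_sqrt]
  linear_combination (-Real.cos ((t - u) / √d) ^ (d - 1) * Real.sin ((t - u) / √d)) * hd'

lemma bwInner_veroneseCurveDeriv_self (h01 : (0 : Fin (n + 1)) ≠ 1) (hd : 1 ≤ d) (t : ℝ) :
    bwInner n d (veroneseCurveDeriv n d t) (veroneseCurveDeriv n d t) = 1 := by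
  have h := (hasCoeffDerivAt_veroneseCurve (n := n) t).hasDerivAt_bwInner_right
    isHomogeneous_veroneseCurve (isHomogeneous_veroneseCurveDeriv hd t)
    (isHomogeneous_veroneseCurveDeriv hd t)
  simp only [bwInner_veroneseCurveDeriv_veroneseCurve h01 hd t] at h
  refine h.unique ?_
  have hx := ((hasDerivAt_id' t).const_sub t).div_const (√d)
  refine ((hx.cos.pow (d - 1)).const_mul (-√d)).mul hx.sin |>.congr_deriv ?_
  have : √d ≠ 0 := by positivity
  field_simp
  simp

lemma veroneseCurve_zero : veroneseCurve n d 0 = x₀ ^ d := by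
  simp [veroneseCurve]

lemma bwInner_X_pow_self (h01 : (0 : Fin (n + 1)) ≠ 1) : bwInner n d (x₀ ^ d) (x₀ ^ d) = 1 := by
  simpa using bwInner_linearForm_pow (d := d) h01 1 0 1 0

lemma bwInner_X_pow_mul_X_sq_X_pow (h01 : (0 : Fin (n + 1)) ≠ 1) :
    bwInner n d (x₀ ^ (d - 2) * x₁ ^ 2) (x₀ ^ d) = 0 := by
  rw [X_pow_mul_X_pow_eq_monomial, X_pow_eq_monomial, bwInner_monomial_monomial, if_neg]
  intro h
  simpa [h01.symm] using DFunLike.congr_fun h 1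

lemma bwInner_smul_X_pow_mul_X_sq_self (h01 : (0 : Fin (n + 1)) ≠ 1) (hd : 2 ≤ d) :
    bwInner n d (((d : ℝ) - 1) • (x₀ ^ (d - 2) * x₁ ^ 2)) (((d : ℝ) - 1) • (x₀ ^ (d - 2) * x₁ ^ 2))
      = 2 * ((d : ℝ) - 1) / d := by
  simp only [← bwForm_apply, map_smul, LinearMap.smul_apply, smul_eq_mul]
  rw [bwForm_apply, X_pow_mul_X_pow_eq_monomial, bwInner_monomial_monomial, if_pos rfl,
    prod_single_add_single_apply h01 _ _ (f := fun m => (m.factorial : ℝ)) (by simp)]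
  obtain ⟨e, rfl⟩ : ∃ e, d = e + 2 := ⟨d - 2, by omega⟩
  simp only [Nat.add_sub_cancel, Nat.factorial_succ]
  push_cast
  field_simp
  ring

lemma bwInner_secondDeriv_veroneseCurve_zero (h01 : (0 : Fin (n + 1)) ≠ 1) :
    bwInner n d (((d : ℝ) - 1) • (x₀ ^ (d - 2) * x₁ ^ 2) - x₀ ^ d) (veroneseCurve n d 0) = -1 := by
  rw [← bwForm_apply, map_sub, map_smul, LinearMap.sub_apply, LinearMap.smul_apply, bwForm_apply,
    bwForm_apply, veroneseCurve_zero, bwInner_X_pow_mul_X_sq_X_pow h01, bwInner_X_pow_self h01,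
    smul_zero, zero_sub]

end Veronese

/-- For `n ≥ 1`, `d ≥ 2`, the curve `c(t) = (cos(t/√d)x₀ + sin(t/√d)x₁)^d`
lies on the Bombieri–Weyl unit sphere and is a unit-speed curve.  Moreover
`c''(0) = -x₀^d + (d-1)x₀^{d-2}x₁²`, `⟨c''(0), c(0)⟩_BW = -1`, and the component of `c''(0)`
orthogonal to `c(0)` has Bombieri–Weyl norm `√(2(d-1)/d)`. -/
theorem veronese_curve_second_derivative (n d : ℕ) (hn : 1 ≤ n) (hd : 2 ≤ d) :
    (∀ t, bwInner n d (veroneseCurve n d t) (veroneseCurve n d t) = 1) ∧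
    (∀ t, (∀ γ : Fin (n + 1) →₀ ℕ,
        HasDerivAt (fun s => coeff γ (veroneseCurve n d s))
          (coeff γ (veroneseCurveDeriv n d t)) t) ∧
      bwInner n d (veroneseCurveDeriv n d t) (veroneseCurveDeriv n d t) = 1) ∧
    (∀ γ : Fin (n + 1) →₀ ℕ,
      deriv (fun t => deriv (fun s => coeff γ (veroneseCurve n d s)) t) 0
        = coeff γ (((d : ℝ) - 1) • (X 0 ^ (d - 2) * X 1 ^ 2)
            - (X 0 ^ d : MvPolynomial (Fin (n + 1)) ℝ))) ∧
    bwInner n d (((d : ℝ) - 1) • (X 0 ^ (d - 2) * X 1 ^ 2) - X 0 ^ d) (veroneseCurve n d 0)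
      = -1 ∧
    Real.sqrt (bwInner n d
        ((((d : ℝ) - 1) • (X 0 ^ (d - 2) * X 1 ^ 2) - X 0 ^ d)
          - bwInner n d (((d : ℝ) - 1) • (X 0 ^ (d - 2) * X 1 ^ 2) - X 0 ^ d)
              (veroneseCurve n d 0) • veroneseCurve n d 0)
        ((((d : ℝ) - 1) • (X 0 ^ (d - 2) * X 1 ^ 2) - X 0 ^ d)
          - bwInner n d (((d : ℝ) - 1) • (X 0 ^ (d - 2) * X 1 ^ 2) - X 0 ^ d)
              (veroneseCurve n d 0) • veroneseCurve n d 0))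
      = Real.sqrt (2 * ((d : ℝ) - 1) / d) := by
  have h01 : (0 : Fin (n + 1)) ≠ 1 := by
    obtain ⟨m, rfl⟩ : ∃ m, n = m + 1 := ⟨n - 1, by omega⟩
    exact Fin.zero_ne_one
  have hd₁ : 1 ≤ d := by omega
  have hP := bwInner_secondDeriv_veroneseCurve_zero (d := d) h01
  refine ⟨fun t => by rw [bwInner_veroneseCurve h01, sub_self, zero_div, Real.cos_zero, one_pow],
    fun t => ⟨hasCoeffDerivAt_veroneseCurve t, bwInner_veroneseCurveDeriv_self h01 hd₁ t⟩,
    fun γ => ?_, hP, ?_⟩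
  · have hderiv : deriv (fun s => coeff γ (veroneseCurve n d s)) =
        fun t => coeff γ (veroneseCurveDeriv n d t) :=
      funext fun t => (hasCoeffDerivAt_veroneseCurve t γ).deriv
    rw [hderiv, (hasCoeffDerivAt_veroneseCurveDeriv_zero hd₁ γ).deriv]
  · rw [hP, neg_one_smul, sub_neg_eq_add, veroneseCurve_zero, sub_add_cancel,
      bwInner_smul_X_pow_mul_X_sq_self h01 hd]
end
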